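/- arXiv:2107.06908 — 2 statements merged into one kernel-verified Lean document; each statement's English description precedes it below -/
import Mathlib

section
/- Let X be a standard Borel space, P a probability measure on X, and φ : X → ℝ a Borel measurable statistic. Suppose there exist a Borel set Φ ⊆ ℝ with (φ∗P)(Φ) > 0 and a measurable set A ⊆ X such that for (φ∗P)-almost every t ∈ Φ the regular conditional distribution of x given φ(x) = t under P assigns A a probability strictly between 0 and 1. Then there exists a probability measure Q on X with Q ≠ P and φ∗Q = φ∗P; consequently, for every Borel rejection region Γ ⊆ ℝ, Q(φ⁻¹(Γ)) = P(φ⁻¹(Γ)), i.e. the power of the single-sample test based on φ equals its false positive rate against Q (Proposition 1). -/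
open MeasureTheory ProbabilityTheory

/-- Proposition 1: if the regular conditional distribution of `x` given `φ x = t` is
non-degenerate (witnessed by a set `A` getting conditional probability strictly between
0 and 1) on a set `Φ` of positive `φ∗P`-measure, then there is a probability measure
`Q ≠ P` whose pushforward under `φ` agrees with that of `P`; hence every rejection
region based on `φ` has power equal to its false positive rate against `Q`. -/
theorem ood_single_sample_test_impossible
    {X : Type*} [MeasurableSpace X] [StandardBorelSpace X] [Nonempty X]
    (P : Measure X) [IsProbabilityMeasure P]
    (φ : X → ℝ) (hφ : Measurable φ)
    (Φ : Set ℝ) (hΦ : MeasurableSet Φ) (hΦpos : 0 < P.map φ Φ)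
    (A : Set X) (hA : MeasurableSet A)
    (hcond : ∀ᵐ t ∂(P.map φ), t ∈ Φ →
      0 < condDistrib id φ P t A ∧ condDistrib id φ P t A < 1) :
    ∃ Q : Measure X, IsProbabilityMeasure Q ∧ Q ≠ P ∧ Q.map φ = P.map φ ∧
      ∀ Γ : Set ℝ, MeasurableSet Γ → Q (φ ⁻¹' Γ) = P (φ ⁻¹' Γ) := by
  classical
  set κ := condDistrib id φ P with hκ
  set p : ℝ → ENNReal := fun t => κ t A with hp
  have hpmeas : Measurable p := Kernel.measurable_coe κ hA
  have hple : ∀ t, p t ≤ 1 := fun t => prob_le_one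
  set g : X → ENNReal := fun x => if φ x ∈ Φ then (1 - p (φ x)) + A.indicator 1 x else 1
    with hg
  have hgmeas : Measurable g := by
    exact Measurable.ite (hφ hΦ)
      ((measurable_const.sub (hpmeas.comp hφ)).add (measurable_const.indicator hA))
      measurable_const
  set Q : Measure X := P.withDensity g with hQ
  -- the conditional-distribution identity
  have hkey0 : ∀ T : Set ℝ, MeasurableSet T →
      ∫⁻ a in φ ⁻¹' T, p (φ a) ∂P = P (φ ⁻¹' T ∩ A) := by
    intro T hT
    have := setLIntegral_preimage_condDistrib (μ := P) (Y := id) hφ aemeasurable_id hA hT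
    simpa using this
  -- key computation: on a preimage set where Φ holds, the integral of g is the measure
  have hm1 : Measurable fun x => (1 : ENNReal) - p (φ x) :=
    measurable_const.sub (hpmeas.comp hφ)
  have hm2 : Measurable fun x => p (φ x) := hpmeas.comp hφ
  have hkey : ∀ T : Set ℝ, MeasurableSet T → T ⊆ Φ →
      ∫⁻ x in φ ⁻¹' T, g x ∂P = P (φ ⁻¹' T) := by
    intro T hT hTΦ
    have hST : MeasurableSet (φ ⁻¹' T) := hφ hT
    have hcongr : ∫⁻ x in φ ⁻¹' T, g x ∂P
        = ∫⁻ x in φ ⁻¹' T, ((1 - p (φ x)) + A.indicator 1 x) ∂P := by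
      refine setLIntegral_congr_fun hST (fun x hx => ?_)
      simp only [hg, if_pos (hTΦ hx)]
    rw [hcongr, lintegral_add_left hm1]
    have h1 : ∫⁻ x in φ ⁻¹' T, A.indicator 1 x ∂P = P (φ ⁻¹' T ∩ A) := by
      rw [lintegral_indicator hA]
      simp [Measure.restrict_apply hA, Set.inter_comm]
    have h2 : ∫⁻ x in φ ⁻¹' T, (1 - p (φ x)) ∂P = P (φ ⁻¹' T) - P (φ ⁻¹' T ∩ A) := by
      rw [lintegral_sub hm2]
      · rw [hkey0 T hT, setLIntegral_one]
      · exact ne_of_lt (lt_of_le_of_lt (le_of_eq (hkey0 T hT)) (measure_lt_top _ _))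
      · exact Filter.Eventually.of_forall fun x => hple (φ x)
    rw [h1, h2, tsub_add_cancel_of_le (measure_mono Set.inter_subset_left)]
  -- the power identity, for all Γ
  have hpow : ∀ Γ : Set ℝ, MeasurableSet Γ → Q (φ ⁻¹' Γ) = P (φ ⁻¹' Γ) := by
    intro Γ hΓ
    have hsplit : φ ⁻¹' Γ = φ ⁻¹' (Γ ∩ Φ) ∪ φ ⁻¹' (Γ \ Φ) := by
      rw [← Set.preimage_union, Set.inter_union_diff]
    have hdisj : Disjoint (φ ⁻¹' (Γ ∩ Φ)) (φ ⁻¹' (Γ \ Φ)) :=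
      (disjoint_sdiff_self_right.mono_left Set.inter_subset_right).preimage φ
    have e1 : ∫⁻ x in φ ⁻¹' (Γ ∩ Φ), g x ∂P = P (φ ⁻¹' (Γ ∩ Φ)) :=
      hkey _ (hΓ.inter hΦ) Set.inter_subset_right
    have e2 : ∫⁻ x in φ ⁻¹' (Γ \ Φ), g x ∂P = P (φ ⁻¹' (Γ \ Φ)) := by
      have : ∫⁻ x in φ ⁻¹' (Γ \ Φ), g x ∂P = ∫⁻ _ in φ ⁻¹' (Γ \ Φ), (1 : ENNReal) ∂P := by
        refine setLIntegral_congr_fun (hφ (hΓ.diff hΦ)) (fun x hx => ?_)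
        simp only [hg, if_neg hx.2]
      rw [this, setLIntegral_one]
    rw [hQ, withDensity_apply _ (hφ hΓ), hsplit,
      lintegral_union (hφ (hΓ.diff hΦ)) hdisj, e1, e2,
      measure_union hdisj (hφ (hΓ.diff hΦ))]
  refine ⟨Q, ?_, ?_, ?_, hpow⟩
  · constructor
    have := hpow Set.univ MeasurableSet.univ
    simpa using this
  · -- Q ≠ P
    have hcond' : ∀ᵐ x ∂P, φ x ∈ Φ → 0 < p (φ x) ∧ p (φ x) < 1 :=
      ae_of_ae_map hφ.aemeasurable hcond
    set S : Set X := φ ⁻¹' Φ ∩ A with hS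
    have hSm : MeasurableSet S := (hφ hΦ).inter hA
    have hSpos : 0 < P S := by
      by_contra h
      have h0 : P S = 0 := by simpa using h
      have hI : ∫⁻ a in φ ⁻¹' Φ, p (φ a) ∂P = 0 := by rw [hkey0 Φ hΦ]; exact h0
      have hz := (lintegral_eq_zero_iff hm2).mp hI
      have hz' : ∀ᵐ x ∂P, x ∈ φ ⁻¹' Φ → p (φ x) = 0 :=
        (ae_restrict_iff' (hφ hΦ)).mp hz
      have : ∀ᵐ x ∂P, x ∉ φ ⁻¹' Φ := by
        filter_upwards [hz', hcond'] with x h1 h2 hx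
        exact absurd (h1 hx) (ne_of_gt (h2 hx).1)
      have hPΦ : 0 < P (φ ⁻¹' Φ) := by rwa [Measure.map_apply hφ hΦ] at hΦpos
      exact absurd (measure_eq_zero_iff_ae_notMem.mpr this) (ne_of_gt hPΦ)
    have hc : 0 < ∫⁻ x in S, (1 - p (φ x)) ∂P := by
      by_contra h
      have h0 : ∫⁻ x in S, (1 - p (φ x)) ∂P = 0 := by simpa using h
      have hz := (lintegral_eq_zero_iff hm1).mp h0
      have hz' : ∀ᵐ x ∂P, x ∈ S → (1 : ENNReal) - p (φ x) = 0 :=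
        (ae_restrict_iff' hSm).mp hz
      have : ∀ᵐ x ∂P, x ∉ S := by
        filter_upwards [hz', hcond'] with x h1 h2 hx
        have hlt := (h2 hx.1).2
        have := h1 hx
        rw [tsub_eq_zero_iff_le] at this
        exact absurd this (not_le.mpr hlt)
      exact absurd (measure_eq_zero_iff_ae_notMem.mpr this) (ne_of_gt hSpos)
    have hQS : Q S = (∫⁻ x in S, (1 - p (φ x)) ∂P) + P S := by
      rw [hQ, withDensity_apply _ hSm]
      have hcongr : ∫⁻ x in S, g x ∂P = ∫⁻ x in S, ((1 - p (φ x)) + 1) ∂P := by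
        refine setLIntegral_congr_fun hSm (fun x hx => ?_)
        have hxΦ : φ x ∈ Φ := hx.1
        simp [hg, hxΦ, Set.indicator_of_mem hx.2]
      rw [hcongr, lintegral_add_left hm1,
        setLIntegral_one]
    intro hQP
    have : P S < Q S := by
      rw [hQS, add_comm]
      exact ENNReal.lt_add_right (measure_ne_top P S) (ne_of_gt hc)
    rw [hQP] at this
    exact lt_irrefl _ this
  · refine Measure.ext fun Γ hΓ => ?_
    rw [Measure.map_apply hφ hΓ, Measure.map_apply hφ hΓ]
    exact hpow Γ hΓ
end

section
/- (Likelihood ratio maximizes AUC, the claim underlying Section 3.3.) Let μ be a σ-finite measure on X and let P, Q be probability measures with densities p, q with respect to μ, with q(x) > 0 for μ-almost every x. Define the likelihood ratio Λ(x) = p(x)/q(x). Then for every measurable statistic s : X → ℝ, the AUC of s for discriminating P from Q is at most the AUC of Λ: (P ⊗ Q)({(x,y) : s(x) > s(y)}) + (1/2)·(P ⊗ Q)({(x,y) : s(x) = s(y)}) ≤ (P ⊗ Q)({(x,y) : Λ(x) > Λ(y)}) + (1/2)·(P ⊗ Q)({(x,y) : Λ(x) = Λ(y)}), where x ∼ P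 and y ∼ Q are independent. -/
open MeasureTheory ENNReal

private lemma my_withDensity_prod {X : Type*} [MeasurableSpace X] (μ : Measure X) [SigmaFinite μ]
    (p q : X → ℝ≥0∞) (hp : Measurable p) (hq : Measurable q)
    [SigmaFinite (μ.withDensity p)] [SigmaFinite (μ.withDensity q)] :
    (μ.withDensity p).prod (μ.withDensity q) = (μ.prod μ).withDensity fun z => p z.1 * q z.2 := by
  refine Measure.prod_eq fun s t hs ht => ?_
  rw [withDensity_apply _ (hs.prod ht), ← Measure.prod_restrict,
      lintegral_prod_mul hp.aemeasurable hq.aemeasurable,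
      withDensity_apply _ hs, withDensity_apply _ ht]

private lemma my_div_lt_div_iff {px qx py qy : ℝ≥0∞} (hqx0 : qx ≠ 0) (hqx : qx ≠ ∞)
    (hpx : px ≠ ∞) (hqy0 : qy ≠ 0) (hqy : qy ≠ ∞) (hpy : py ≠ ∞) :
    px / qx < py / qy ↔ px * qy < py * qx := by
  have h1 : px / qx ≠ ∞ := (ENNReal.div_lt_top hpx hqx0).ne
  have h2 : py / qy ≠ ∞ := (ENNReal.div_lt_top hpy hqy0).ne
  have h3 : px * qy ≠ ∞ := ENNReal.mul_ne_top hpx hqy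
  have h4 : py * qx ≠ ∞ := ENNReal.mul_ne_top hpy hqx
  rw [← ENNReal.toReal_lt_toReal h1 h2, ← ENNReal.toReal_lt_toReal h3 h4,
      ENNReal.toReal_div, ENNReal.toReal_div, ENNReal.toReal_mul, ENNReal.toReal_mul,
      div_lt_div_iff₀ (ENNReal.toReal_pos hqx0 hqx) (ENNReal.toReal_pos hqy0 hqy)]

private lemma my_div_eq_div_iff {px qx py qy : ℝ≥0∞} (hqx0 : qx ≠ 0) (hqx : qx ≠ ∞)
    (hpx : px ≠ ∞) (hqy0 : qy ≠ 0) (hqy : qy ≠ ∞) (hpy : py ≠ ∞) :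
    px / qx = py / qy ↔ px * qy = py * qx := by
  have h1 : px / qx ≠ ∞ := (ENNReal.div_lt_top hpx hqx0).ne
  have h2 : py / qy ≠ ∞ := (ENNReal.div_lt_top hpy hqy0).ne
  have h3 : px * qy ≠ ∞ := ENNReal.mul_ne_top hpx hqy
  have h4 : py * qx ≠ ∞ := ENNReal.mul_ne_top hpy hqx
  rw [← ENNReal.toReal_eq_toReal_iff' h1 h2, ← ENNReal.toReal_eq_toReal_iff' h3 h4,
      ENNReal.toReal_div, ENNReal.toReal_div, ENNReal.toReal_mul, ENNReal.toReal_mul,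
      div_eq_div_iff (ENNReal.toReal_pos hqx0 hqx).ne' (ENNReal.toReal_pos hqy0 hqy).ne']

/-- The symmetrization argument: if pointwise a.e. the symmetrized AUC integrand for `(T, E)`
is below that for `(T', E')`, then the AUC for `(T, E)` is at most the AUC for `(T', E')`. -/
private lemma my_auc_le_auc {Y : Type*} [MeasurableSpace Y] (ν : Measure (Y × Y))
    (hswap : ν.map Prod.swap = ν) (d : Y × Y → ℝ≥0∞) (hd : Measurable d)
    {T E T' E' : Set (Y × Y)} (hT : MeasurableSet T) (hE : MeasurableSet E)
    (hT' : MeasurableSet T') (hE' : MeasurableSet E')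
    (hpt : ∀ᵐ z ∂ν,
      (T.indicator d z + E.indicator d z / 2) +
        (T.indicator d (Prod.swap z) + E.indicator d (Prod.swap z) / 2) ≤
      (T'.indicator d z + E'.indicator d z / 2) +
        (T'.indicator d (Prod.swap z) + E'.indicator d (Prod.swap z) / 2)) :
    ν.withDensity d T + ν.withDensity d E / 2 ≤
      ν.withDensity d T' + ν.withDensity d E' / 2 := by
  have hG : ∀ (A B : Set (Y × Y)), MeasurableSet A → MeasurableSet B →
      Measurable (fun z => A.indicator d z + B.indicator d z / 2) := fun A B hA hB =>
    (hd.indicator hA).add ((hd.indicator hB).div_const 2)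
  have hint : ∀ (A B : Set (Y × Y)), MeasurableSet A → MeasurableSet B →
      ν.withDensity d A + ν.withDensity d B / 2
        = ∫⁻ z, A.indicator d z + B.indicator d z / 2 ∂ν := by
    intro A B hA hB
    rw [lintegral_add_left (hd.indicator hA)]
    have hB2 : ∫⁻ z, B.indicator d z / 2 ∂ν = (∫⁻ z, B.indicator d z ∂ν) / 2 := by
      simp_rw [div_eq_mul_inv]
      exact lintegral_mul_const _ (hd.indicator hB)
    rw [hB2, lintegral_indicator hA d, lintegral_indicator hB d,
        withDensity_apply _ hA, withDensity_apply _ hB]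
  have hsw : ∀ (G : Y × Y → ℝ≥0∞), Measurable G →
      ∫⁻ z, G (Prod.swap z) ∂ν = ∫⁻ z, G z ∂ν := by
    intro G hGm
    conv_rhs => rw [← hswap]
    rw [lintegral_map hGm measurable_swap]
  have key : ∫⁻ z, ((T.indicator d z + E.indicator d z / 2) +
        (T.indicator d (Prod.swap z) + E.indicator d (Prod.swap z) / 2)) ∂ν ≤
      ∫⁻ z, ((T'.indicator d z + E'.indicator d z / 2) +
        (T'.indicator d (Prod.swap z) + E'.indicator d (Prod.swap z) / 2)) ∂ν :=
    lintegral_mono_ae hpt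
  rw [lintegral_add_left (hG T E hT hE), lintegral_add_left (hG T' E' hT' hE'),
      hsw _ (hG T E hT hE), hsw _ (hG T' E' hT' hE'), ← two_mul, ← two_mul] at key
  rw [hint T E hT hE, hint T' E' hT' hE']
  exact (ENNReal.mul_le_mul_iff_right two_ne_zero ENNReal.ofNat_ne_top).mp key

/-- The likelihood ratio maximizes AUC (Section 3.3): for probability measures `P, Q`
with densities `p, q` w.r.t. a σ-finite measure `μ`, with `q > 0` μ-a.e., the AUC of
any statistic `s` for discriminating `P` from `Q` is at most the AUC of the
likelihood ratio `Λ = p/q`. -/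
theorem likelihood_ratio_maximizes_auc
    {X : Type*} [MeasurableSpace X] (μ : Measure X) [SigmaFinite μ]
    (p q : X → ℝ≥0∞) (hp : Measurable p) (hq : Measurable q)
    (P Q : Measure X) [IsProbabilityMeasure P] [IsProbabilityMeasure Q]
    (hP : P = μ.withDensity p) (hQ : Q = μ.withDensity q)
    (hqpos : ∀ᵐ x ∂μ, 0 < q x)
    (s : X → ℝ) (hs : Measurable s) :
    (P.prod Q) {z : X × X | s z.1 > s z.2} +
        (P.prod Q) {z : X × X | s z.1 = s z.2} / 2 ≤
      (P.prod Q) {z : X × X | p z.1 / q z.1 > p z.2 / q z.2} +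
        (P.prod Q) {z : X × X | p z.1 / q z.1 = p z.2 / q z.2} / 2 := by
  subst hP hQ
  have hPQ := my_withDensity_prod μ p q hp hq
  have hLm : Measurable fun x => p x / q x := hp.div hq
  -- finiteness of the densities a.e.
  have hpfin : ∀ᵐ x ∂μ, p x ≠ ∞ := by
    have h1 : (μ.withDensity p) Set.univ = 1 := measure_univ
    rw [withDensity_apply _ MeasurableSet.univ, setLIntegral_univ] at h1
    exact (ae_lt_top hp (h1 ▸ one_ne_top)).mono fun x hx => hx.ne
  have hqfin : ∀ᵐ x ∂μ, q x ≠ ∞ := by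
    have h1 : (μ.withDensity q) Set.univ = 1 := measure_univ
    rw [withDensity_apply _ MeasurableSet.univ, setLIntegral_univ] at h1
    exact (ae_lt_top hq (h1 ▸ one_ne_top)).mono fun x hx => hx.ne
  have hgood : ∀ᵐ x ∂μ, q x ≠ 0 ∧ q x ≠ ∞ ∧ p x ≠ ∞ := by
    filter_upwards [hqpos, hqfin, hpfin] with x h1 h2 h3
    exact ⟨h1.ne', h2, h3⟩
  -- lift goodness to the product
  have hGm : MeasurableSet {x : X | q x ≠ 0 ∧ q x ≠ ∞ ∧ p x ≠ ∞} := by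
    refine (((hq (measurableSet_singleton 0)).compl).inter
      (((hq (measurableSet_singleton ∞)).compl).inter
        ((hp (measurableSet_singleton ∞)).compl)))
  have hμN : μ {x : X | q x ≠ 0 ∧ q x ≠ ∞ ∧ p x ≠ ∞}ᶜ = 0 := by
    rw [Set.compl_setOf]
    exact ae_iff.mp hgood
  have hprod : ∀ᵐ z ∂(μ.prod μ),
      (q z.1 ≠ 0 ∧ q z.1 ≠ ∞ ∧ p z.1 ≠ ∞) ∧ (q z.2 ≠ 0 ∧ q z.2 ≠ ∞ ∧ p z.2 ≠ ∞) := by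
    rw [Filter.eventually_and]
    constructor
    · rw [ae_iff]
      have h1 : {z : X × X | ¬(q z.1 ≠ 0 ∧ q z.1 ≠ ∞ ∧ p z.1 ≠ ∞)}
          = {x : X | q x ≠ 0 ∧ q x ≠ ∞ ∧ p x ≠ ∞}ᶜ ×ˢ (Set.univ : Set X) := by
        ext z; simp [Set.mem_prod]
      rw [h1, Measure.prod_prod, hμN, zero_mul]
    · rw [ae_iff]
      have h1 : {z : X × X | ¬(q z.2 ≠ 0 ∧ q z.2 ≠ ∞ ∧ p z.2 ≠ ∞)}
          = (Set.univ : Set X) ×ˢ {x : X | q x ≠ 0 ∧ q x ≠ ∞ ∧ p x ≠ ∞}ᶜ := by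
        ext z; simp [Set.mem_prod]
      rw [h1, Measure.prod_prod, hμN, mul_zero]
  -- measurability of the four comparison sets
  have hSgt : MeasurableSet {z : X × X | s z.1 > s z.2} :=
    measurableSet_lt (hs.comp measurable_snd) (hs.comp measurable_fst)
  have hSeq : MeasurableSet {z : X × X | s z.1 = s z.2} := by
    have h : {z : X × X | s z.1 = s z.2}
        = {z : X × X | s z.1 ≤ s z.2} ∩ {z : X × X | s z.2 ≤ s z.1} := by
      ext z; simp [le_antisymm_iff, Set.mem_setOf_eq, and_comm]
    rw [h]
    exact (measurableSet_le (hs.comp measurable_fst) (hs.comp measurable_snd)).inter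
      (measurableSet_le (hs.comp measurable_snd) (hs.comp measurable_fst))
  have hTgt : MeasurableSet {z : X × X | p z.1 / q z.1 > p z.2 / q z.2} :=
    measurableSet_lt (hLm.comp measurable_snd) (hLm.comp measurable_fst)
  have hTeq : MeasurableSet {z : X × X | p z.1 / q z.1 = p z.2 / q z.2} := by
    have h : {z : X × X | p z.1 / q z.1 = p z.2 / q z.2}
        = {z : X × X | p z.1 / q z.1 ≤ p z.2 / q z.2}
          ∩ {z : X × X | p z.2 / q z.2 ≤ p z.1 / q z.1} := by
      ext z; simp [le_antisymm_iff, Set.mem_setOf_eq, and_comm]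
    rw [h]
    exact (measurableSet_le (hLm.comp measurable_fst) (hLm.comp measurable_snd)).inter
      (measurableSet_le (hLm.comp measurable_snd) (hLm.comp measurable_fst))
  rw [hPQ]
  set d : X × X → ℝ≥0∞ := fun z => p z.1 * q z.2 with hd
  have hdm : Measurable d := (hp.comp measurable_fst).mul (hq.comp measurable_snd)
  refine my_auc_le_auc (μ.prod μ) Measure.prod_swap d hdm hSgt hSeq hTgt hTeq ?_
  filter_upwards [hprod] with z hz
  obtain ⟨⟨hq1, hq1t, hp1t⟩, hq2, hq2t, hp2t⟩ := hz
  have hd1 : d z = p z.1 * q z.2 := rfl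
  have hd2 : d (Prod.swap z) = p z.2 * q z.1 := rfl
  have hb_a : (p z.2 / q z.2 < p z.1 / q z.1) ↔ p z.2 * q z.1 < p z.1 * q z.2 :=
    my_div_lt_div_iff hq2 hq2t hp2t hq1 hq1t hp1t
  have ha_b : (p z.1 / q z.1 < p z.2 / q z.2) ↔ p z.1 * q z.2 < p z.2 * q z.1 :=
    my_div_lt_div_iff hq1 hq1t hp1t hq2 hq2t hp2t
  have heq : (p z.1 / q z.1 = p z.2 / q z.2) ↔ p z.1 * q z.2 = p z.2 * q z.1 :=
    my_div_eq_div_iff hq1 hq1t hp1t hq2 hq2t hp2t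
  simp only [Set.indicator_apply, Set.mem_setOf_eq, gt_iff_lt, Prod.fst_swap, Prod.snd_swap,
    hd1, hd2]
  set a := p z.1 * q z.2 with ha
  set b := p z.2 * q z.1 with hb
  refine le_trans (b := max a b) ?_ ?_
  · -- the statistic side is at most `max a b`
    rcases lt_trichotomy (s z.1) (s z.2) with h | h | h
    · simp [h, h.ne, h.ne', not_lt.mpr h.le]
    · simp only [h, lt_irrefl, if_false, if_true, zero_add]
      calc a / 2 + b / 2 ≤ max a b / 2 + max a b / 2 :=
            add_le_add (ENNReal.div_le_div_right (le_max_left a b) 2)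
              (ENNReal.div_le_div_right (le_max_right a b) 2)
        _ = max a b := ENNReal.add_halves _
    · simp [h, h.ne, h.ne', not_lt.mpr h.le]
  · -- the likelihood-ratio side equals `max a b`
    rcases lt_trichotomy a b with h | h | h
    · have hL : p z.1 / q z.1 < p z.2 / q z.2 := ha_b.mpr h
      simp [hL, hL.ne, hL.ne', not_lt.mpr hL.le, max_eq_right h.le]
    · have hL : p z.1 / q z.1 = p z.2 / q z.2 := heq.mpr h
      rw [← h, max_self]
      simp only [hL, lt_irrefl, if_false, if_true, zero_add]
      rw [ENNReal.add_halves]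
    · have hL : p z.2 / q z.2 < p z.1 / q z.1 := hb_a.mpr h
      simp [hL, hL.ne, hL.ne', not_lt.mpr hL.le, max_eq_left h.le]
end
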